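/- Let A, B be n×n positive semidefinite complex matrices, let X be an arbitrary n×n complex matrix, and let t ∈ (0,1). Then ‖A^t X B^(1-t) + A^(1-t) X B^t‖_F ≤ ‖A X + X B‖_F, where ‖·‖_F is the Frobenius norm. -/
import Mathlib

open scoped ComplexOrder

/-- The real power `A ^ r` of a (positive semidefinite) matrix, defined via the
continuous functional calculus (equivalently, via the spectral decomposition). -/
noncomputable def matRpow {n : ℕ} (A : Matrix (Fin n) (Fin n) ℂ) (r : ℝ) :
    Matrix (Fin n) (Fin n) ℂ :=
  cfc (fun x : ℝ => x ^ r) A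

/-- The Frobenius (Hilbert–Schmidt) norm `‖M‖_F = (∑_{i,j} |M_{ij}|²)^{1/2}`. -/
noncomputable def frobeniusNorm' {n : ℕ} (M : Matrix (Fin n) (Fin n) ℂ) : ℝ :=
  Real.sqrt (∑ i, ∑ j, ‖M i j‖ ^ 2)

open Matrix in
lemma frobSq_eq_trace {n : ℕ} (M : Matrix (Fin n) (Fin n) ℂ) :
    (((Mᴴ * M).trace) : ℂ) = ((∑ i, ∑ j, ‖M i j‖ ^ 2 : ℝ) : ℂ) := by
  simp only [trace, diag, mul_apply, conjTranspose_apply]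
  push_cast
  rw [Finset.sum_comm]
  refine Finset.sum_congr rfl fun i _ => Finset.sum_congr rfl fun j _ => ?_
  rw [Complex.star_def, mul_comm, Complex.mul_conj']

open Matrix in
lemma frob_unitary_conj {n : ℕ} (U V : Matrix (Fin n) (Fin n) ℂ)
    (hU : U ∈ Matrix.unitaryGroup (Fin n) ℂ) (hV : V ∈ Matrix.unitaryGroup (Fin n) ℂ)
    (M : Matrix (Fin n) (Fin n) ℂ) :
    frobeniusNorm' (U * M * Vᴴ) = frobeniusNorm' M := by
  have hUU : Uᴴ * U = 1 := by
    rw [← star_eq_conjTranspose]; exact Unitary.star_mul_self_of_mem hU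
  have hVV : Vᴴ * V = 1 := by
    rw [← star_eq_conjTranspose]; exact Unitary.star_mul_self_of_mem hV
  have hUU2 : ∀ Z : Matrix (Fin n) (Fin n) ℂ, Uᴴ * (U * Z) = Z := fun Z => by
    rw [← Matrix.mul_assoc, hUU, Matrix.one_mul]
  have key : ((U * M * Vᴴ)ᴴ * (U * M * Vᴴ)).trace = (Mᴴ * M).trace := by
    have h1 : (U * M * Vᴴ)ᴴ * (U * M * Vᴴ) = V * (Mᴴ * (M * Vᴴ)) := by
      simp [conjTranspose_mul, Matrix.mul_assoc, hUU2]
    rw [h1, Matrix.trace_mul_comm, Matrix.mul_assoc, Matrix.mul_assoc, hVV, Matrix.mul_one]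
  have h2 := frobSq_eq_trace (U * M * Vᴴ)
  rw [key, frobSq_eq_trace M, Complex.ofReal_inj] at h2
  unfold frobeniusNorm'
  rw [h2]

lemma scalar_heinz {a b t : ℝ} (ha : 0 ≤ a) (hb : 0 ≤ b) (ht0 : 0 ≤ t) (ht1 : t ≤ 1) :
    a ^ t * b ^ (1 - t) + a ^ (1 - t) * b ^ t ≤ a + b := by
  have h1 := Real.geom_mean_le_arith_mean2_weighted (w₁ := t) (w₂ := 1 - t)
    ht0 (by linarith) ha hb (by ring)
  have h2 := Real.geom_mean_le_arith_mean2_weighted (w₁ := 1 - t) (w₂ := t)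
    (by linarith) ht0 ha hb (by ring)
  calc a ^ t * b ^ (1 - t) + a ^ (1 - t) * b ^ t
      ≤ (t * a + (1 - t) * b) + ((1 - t) * a + t * b) := add_le_add h1 h2
    _ = a + b := by ring

open Matrix in
/-- **Strengthened Heinz inequality with an inserted matrix, Frobenius-norm case.**
For `n×n` positive semidefinite complex matrices `A, B`, any `n×n` matrix `X`,
and `t ∈ (0,1)`, `‖A^t X B^(1-t) + A^(1-t) X B^t‖_F ≤ ‖A X + X B‖_F`. -/
theorem heinz_inequality_inserted_frobenius {n : ℕ} (A B X : Matrix (Fin n) (Fin n) ℂ)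
    (hA : A.PosSemidef) (hB : B.PosSemidef) (t : ℝ) (ht : t ∈ Set.Ioo (0 : ℝ) 1) :
    frobeniusNorm' (matRpow A t * X * matRpow B (1 - t) +
        matRpow A (1 - t) * X * matRpow B t) ≤
      frobeniusNorm' (A * X + X * B) := by
  obtain ⟨ht0, ht1⟩ := ht
  have hAh := hA.1
  have hBh := hB.1
  set U : Matrix (Fin n) (Fin n) ℂ := (Matrix.IsHermitian.eigenvectorUnitary hAh : Matrix (Fin n) (Fin n) ℂ) with hUdef
  set V : Matrix (Fin n) (Fin n) ℂ := (Matrix.IsHermitian.eigenvectorUnitary hBh : Matrix (Fin n) (Fin n) ℂ) with hVdef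
  have hU : U ∈ Matrix.unitaryGroup (Fin n) ℂ := SetLike.coe_mem _
  have hV : V ∈ Matrix.unitaryGroup (Fin n) ℂ := SetLike.coe_mem _
  set lam := hAh.eigenvalues with hlam
  set mu := hBh.eigenvalues with hmu
  have hlam0 : ∀ i, 0 ≤ lam i := fun i => hA.eigenvalues_nonneg i
  have hmu0 : ∀ i, 0 ≤ mu i := fun i => hB.eigenvalues_nonneg i
  set Y : Matrix (Fin n) (Fin n) ℂ := Uᴴ * X * V with hY
  have hXY : X = U * Y * Vᴴ := by
    have hUU : U * Uᴴ = 1 := by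
      rw [← star_eq_conjTranspose]; exact Unitary.mul_star_self_of_mem hU
    have hVV : V * Vᴴ = 1 := by
      rw [← star_eq_conjTranspose]; exact Unitary.mul_star_self_of_mem hV
    rw [hY]
    calc X = (U * Uᴴ) * X * (V * Vᴴ) := by rw [hUU, hVV, Matrix.one_mul, Matrix.mul_one]
      _ = U * (Uᴴ * X * V) * Vᴴ := by simp only [Matrix.mul_assoc]
  -- express matRpow via spectral decomposition
  have hArpow : ∀ r : ℝ, matRpow A r =
      U * Matrix.diagonal (fun i => (Complex.ofReal (lam i ^ r))) * Uᴴ := by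
    intro r
    rw [matRpow, hAh.cfc_eq, Matrix.IsHermitian.cfc]
    rfl
  have hBrpow : ∀ r : ℝ, matRpow B r =
      V * Matrix.diagonal (fun i => (Complex.ofReal (mu i ^ r))) * Vᴴ := by
    intro r
    rw [matRpow, hBh.cfc_eq, Matrix.IsHermitian.cfc]
    rfl
  have hAspec : A = U * Matrix.diagonal (fun i => (Complex.ofReal (lam i))) * Uᴴ := by
    rw [← star_eq_conjTranspose]
    exact hAh.spectral_theorem
  have hBspec : B = V * Matrix.diagonal (fun i => (Complex.ofReal (mu i))) * Vᴴ := by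
    rw [← star_eq_conjTranspose]
    exact hBh.spectral_theorem
  -- key conjugation identities
  have conj1 : ∀ a b : Fin n → ℂ,
      (U * Matrix.diagonal a * Uᴴ) * X * (V * Matrix.diagonal b * Vᴴ) =
        U * (Matrix.diagonal a * Y * Matrix.diagonal b) * Vᴴ := by
    intro a b
    have hUU2 : ∀ Z : Matrix (Fin n) (Fin n) ℂ, Vᴴ * (V * Z) = Z := fun Z => by
      rw [← Matrix.mul_assoc, show Vᴴ * V = 1 by
        rw [← star_eq_conjTranspose]; exact Unitary.star_mul_self_of_mem hV, Matrix.one_mul]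
    conv_lhs => rw [hXY]
    simp only [Matrix.mul_assoc, hUU2]
    have hUU3 : ∀ Z : Matrix (Fin n) (Fin n) ℂ, Uᴴ * (U * Z) = Z := fun Z => by
      rw [← Matrix.mul_assoc, show Uᴴ * U = 1 by
        rw [← star_eq_conjTranspose]; exact Unitary.star_mul_self_of_mem hU, Matrix.one_mul]
    simp only [hUU3, hY, Matrix.mul_assoc, hUU2]
  -- rewrite LHS and RHS as conjugated matrices
  have hL : matRpow A t * X * matRpow B (1 - t) + matRpow A (1 - t) * X * matRpow B t =
      U * ((Matrix.diagonal (fun i => (Complex.ofReal (lam i ^ t))) * Y *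
            Matrix.diagonal (fun i => (Complex.ofReal (mu i ^ (1 - t))))) +
           (Matrix.diagonal (fun i => (Complex.ofReal (lam i ^ (1 - t)))) * Y *
            Matrix.diagonal (fun i => (Complex.ofReal (mu i ^ t))))) * Vᴴ := by
    rw [hArpow, hArpow, hBrpow, hBrpow, conj1, conj1, Matrix.mul_add, Matrix.add_mul]
  have hR : A * X + X * B =
      U * ((Matrix.diagonal (fun i => (Complex.ofReal (lam i))) * Y) +
           (Y * Matrix.diagonal (fun i => (Complex.ofReal (mu i))))) * Vᴴ := by
    have h1 : A * X = U * (Matrix.diagonal (fun i => (Complex.ofReal (lam i))) * Y) * Vᴴ := by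
      conv_lhs => rw [hAspec, hXY]
      have hUU3 : ∀ Z : Matrix (Fin n) (Fin n) ℂ, Uᴴ * (U * Z) = Z := fun Z => by
        rw [← Matrix.mul_assoc, show Uᴴ * U = 1 by
          rw [← star_eq_conjTranspose]; exact Unitary.star_mul_self_of_mem hU, Matrix.one_mul]
      simp only [Matrix.mul_assoc, hUU3]
    have h2 : X * B = U * (Y * Matrix.diagonal (fun i => (Complex.ofReal (mu i)))) * Vᴴ := by
      conv_lhs => rw [hBspec, hXY]
      have hVV2 : ∀ Z : Matrix (Fin n) (Fin n) ℂ, Vᴴ * (V * Z) = Z := fun Z => by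
        rw [← Matrix.mul_assoc, show Vᴴ * V = 1 by
          rw [← star_eq_conjTranspose]; exact Unitary.star_mul_self_of_mem hV, Matrix.one_mul]
      simp only [Matrix.mul_assoc, hVV2]
    rw [h1, h2, Matrix.mul_add, Matrix.add_mul]
  rw [hL, hR, frob_unitary_conj U V hU hV, frob_unitary_conj U V hU hV]
  -- now entrywise comparison
  unfold frobeniusNorm'
  apply Real.sqrt_le_sqrt
  refine Finset.sum_le_sum fun i _ => Finset.sum_le_sum fun j _ => ?_
  rw [show ((Matrix.diagonal (fun i => (Complex.ofReal (lam i ^ t))) * Y *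
            Matrix.diagonal (fun i => (Complex.ofReal (mu i ^ (1 - t))))) +
           (Matrix.diagonal (fun i => (Complex.ofReal (lam i ^ (1 - t)))) * Y *
            Matrix.diagonal (fun i => (Complex.ofReal (mu i ^ t))))) i j =
      (Complex.ofReal (lam i ^ t * mu j ^ (1 - t) + lam i ^ (1 - t) * mu j ^ t)) * Y i j by
    simp only [Matrix.add_apply, Matrix.mul_diagonal, Matrix.diagonal_mul]
    push_cast
    ring]
  rw [show ((Matrix.diagonal (fun i => (Complex.ofReal (lam i))) * Y) +
           (Y * Matrix.diagonal (fun i => (Complex.ofReal (mu i))))) i j =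
      (Complex.ofReal (lam i + mu j)) * Y i j by
    simp only [Matrix.add_apply, Matrix.mul_diagonal, Matrix.diagonal_mul]
    push_cast
    ring]
  rw [norm_mul, norm_mul, Complex.norm_real, Complex.norm_real]
  have hc1 : 0 ≤ lam i ^ t * mu j ^ (1 - t) + lam i ^ (1 - t) * mu j ^ t :=
    add_nonneg (mul_nonneg (Real.rpow_nonneg (hlam0 i) _) (Real.rpow_nonneg (hmu0 j) _))
      (mul_nonneg (Real.rpow_nonneg (hlam0 i) _) (Real.rpow_nonneg (hmu0 j) _))
  have hc2 : 0 ≤ lam i + mu j := add_nonneg (hlam0 i) (hmu0 j)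
  rw [Real.norm_of_nonneg hc1, Real.norm_of_nonneg hc2]
  have hle := scalar_heinz (hlam0 i) (hmu0 j) (le_of_lt ht0) (le_of_lt ht1)
  have : (lam i ^ t * mu j ^ (1 - t) + lam i ^ (1 - t) * mu j ^ t) * ‖Y i j‖ ≤
      (lam i + mu j) * ‖Y i j‖ := mul_le_mul_of_nonneg_right hle (norm_nonneg _)
  exact pow_le_pow_left₀ (by positivity) this 2
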